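/- Under the hypotheses of the perturbed-chain mixing lemma (each $\|P_t - P^*\|_1 \le \epsilon/(2 t_{\mathrm{mix}}(\epsilon/2))$), for any bounded function $g$ on the finite state space with oscillation $M = \sup_{x,y}(g(x)-g(y))$, and the (non-homogeneous) Markov chain $X_1, X_2, \dots$ generated by $\{P_t\}$, we have $|\mathbb{E}[g(X_t)] - \mathbb{E}_{x\sim\pi^*}[g(x)]| \le M\epsilon$ for all $t \ge t_{\mathrm{mix}}(\epsilon/2)$. -/

import Mathlib

/-!
Split `t = s + t_mix`. Over the last `t_mix` steps compare the perturbed chain with the ideal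
chain driven by `P*` from the same distribution at time `s`: replacing one kernel costs at most
`ε / (2 t_mix)` in `ℓ¹`, and `P*` is an `ℓ¹`-contraction, so the errors add up to at most `ε / 2`.
The ideal chain is within `ε / 2` of `π*` by mixing, and a function of oscillation `M` changes
its expectation by at most `M` times the `ℓ¹` distance between two probability vectors.
-/

open Finset

variable {X : Type*} [Fintype X]

/-- Apply a stochastic kernel to a distribution: `(step P ρ) x' = ∑ x, P x' x * ρ x`. -/
noncomputable def step (P : X → X → ℝ) (ρ : X → ℝ) : X → ℝ :=
  fun x' => ∑ x, P x' x * ρ x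

/-- `P_t P_{t-1} ⋯ P_1 ρ`, the distribution of the non-homogeneous chain after `t` steps. -/
noncomputable def seqApply (P : ℕ → X → X → ℝ) (ρ : X → ℝ) : ℕ → X → ℝ
  | 0 => ρ
  | (t + 1) => step (P (t + 1)) (seqApply P ρ t)

noncomputable def l1Dist (f g : X → ℝ) : ℝ := ∑ x, |f x - g x|

lemma l1Dist_triangle (f g h : X → ℝ) : l1Dist f h ≤ l1Dist f g + l1Dist g h := by
  rw [l1Dist, l1Dist, l1Dist, ← sum_add_distrib]
  exact sum_le_sum fun x _ => abs_sub_le _ _ _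

lemma step_nonneg {P : X → X → ℝ} {ρ : X → ℝ} (hP : ∀ x x', 0 ≤ P x' x)
    (hρ : ∀ x, 0 ≤ ρ x) (x' : X) : 0 ≤ step P ρ x' :=
  sum_nonneg fun x _ => mul_nonneg (hP x x') (hρ x)

lemma sum_step {P : X → X → ℝ} (hP : ∀ x, ∑ x', P x' x = 1) (ρ : X → ℝ) :
    ∑ x', step P ρ x' = ∑ x, ρ x := by
  simp only [step]
  rw [sum_comm]
  simp [← sum_mul, hP]

lemma seqApply_nonneg {P : ℕ → X → X → ℝ} {ρ : X → ℝ} (hP : ∀ t x x', 0 ≤ P t x' x)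
    (hρ : ∀ x, 0 ≤ ρ x) (t : ℕ) (x : X) : 0 ≤ seqApply P ρ t x := by
  induction t generalizing x with
  | zero => exact hρ x
  | succ t ih => exact step_nonneg (hP (t + 1)) ih x

lemma sum_seqApply {P : ℕ → X → X → ℝ} (hP : ∀ t x, ∑ x', P t x' x = 1) (ρ : X → ℝ)
    (t : ℕ) : ∑ x, seqApply P ρ t x = ∑ x, ρ x := by
  induction t with
  | zero => rfl
  | succ t ih => rw [seqApply, sum_step (hP (t + 1)), ih]

lemma step_sub_right (P : X → X → ℝ) (f g : X → ℝ) :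
    step P f - step P g = step P (f - g) := by
  ext x'
  simp only [step, Pi.sub_apply, ← sum_sub_distrib, mul_sub]

lemma step_sub_left (P Q : X → X → ℝ) (ρ : X → ℝ) :
    step P ρ - step Q ρ = step (P - Q) ρ := by
  ext x'
  simp only [step, Pi.sub_apply, ← sum_sub_distrib, sub_mul]

lemma sum_abs_step_le (K : X → X → ℝ) (v : X → ℝ) :
    ∑ x', |step K v x'| ≤ ∑ x, (∑ x', |K x' x|) * |v x| := calc
  ∑ x', |step K v x'| ≤ ∑ x', ∑ x, |K x' x| * |v x| :=
    sum_le_sum fun x' _ => (abs_sum_le_sum_abs _ _).trans_eq (by simp only [abs_mul])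
  _ = ∑ x, (∑ x', |K x' x|) * |v x| := by rw [sum_comm]; simp only [sum_mul]

lemma l1Dist_step_le {P : X → X → ℝ} (hP_nonneg : ∀ x x', 0 ≤ P x' x)
    (hP_sum : ∀ x, ∑ x', P x' x = 1) (f g : X → ℝ) :
    l1Dist (step P f) (step P g) ≤ l1Dist f g := by
  have hP_abs : ∀ x, ∑ x', |P x' x| = 1 := fun x => by
    simp only [abs_of_nonneg (hP_nonneg x _), hP_sum]
  calc l1Dist (step P f) (step P g) = ∑ x', |step P (f - g) x'| := by
        simp only [l1Dist, ← step_sub_right, Pi.sub_apply]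
    _ ≤ ∑ x, (∑ x', |P x' x|) * |(f - g) x| := sum_abs_step_le _ _
    _ = l1Dist f g := by simp [hP_abs, l1Dist]

lemma l1Dist_step_step_le {P Q : X → X → ℝ} {δ : ℝ}
    (hPQ : ∀ x, ∑ x', |P x' x - Q x' x| ≤ δ) {ν : X → ℝ} (hν_nonneg : ∀ x, 0 ≤ ν x)
    (hν_sum : ∑ x, ν x = 1) : l1Dist (step P ν) (step Q ν) ≤ δ := calc
  l1Dist (step P ν) (step Q ν) = ∑ x', |step (P - Q) ν x'| := by
    simp only [l1Dist, ← step_sub_left, Pi.sub_apply]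
  _ ≤ ∑ x, (∑ x', |(P - Q) x' x|) * |ν x| := sum_abs_step_le _ _
  _ ≤ ∑ x, δ * ν x := sum_le_sum fun x _ => by
    rw [abs_of_nonneg (hν_nonneg x)]
    exact mul_le_mul_of_nonneg_right (hPQ x) (hν_nonneg x)
  _ = δ := by rw [← mul_sum, hν_sum, mul_one]

lemma l1Dist_seqApply_add_le {Q : X → X → ℝ} {P : ℕ → X → X → ℝ} {δ : ℝ}
    (hQ_nonneg : ∀ x x', 0 ≤ Q x' x) (hQ_sum : ∀ x, ∑ x', Q x' x = 1)
    (hP_nonneg : ∀ t x x', 0 ≤ P t x' x) (hP_sum : ∀ t x, ∑ x', P t x' x = 1)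
    (hclose : ∀ t x, ∑ x', |P t x' x - Q x' x| ≤ δ)
    {ρ : X → ℝ} (hρ_nonneg : ∀ x, 0 ≤ ρ x) (hρ_sum : ∑ x, ρ x = 1) (s k : ℕ) :
    l1Dist (seqApply P ρ (s + k)) (seqApply (fun _ => Q) (seqApply P ρ s) k) ≤ k * δ := by
  induction k with
  | zero => simp [l1Dist, seqApply]
  | succ k ih =>
    set μ := seqApply P ρ (s + k)
    have hμ_sum : ∑ x, μ x = 1 := by rw [sum_seqApply hP_sum, hρ_sum]
    calc l1Dist (step (P (s + k + 1)) μ) (step Q (seqApply (fun _ => Q) (seqApply P ρ s) k))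
        ≤ l1Dist (step (P (s + k + 1)) μ) (step Q μ)
          + l1Dist (step Q μ) (step Q (seqApply (fun _ => Q) (seqApply P ρ s) k)) :=
          l1Dist_triangle _ _ _
      _ ≤ δ + k * δ := add_le_add
          (l1Dist_step_step_le (hclose _) (seqApply_nonneg hP_nonneg hρ_nonneg _) hμ_sum)
          ((l1Dist_step_le hQ_nonneg hQ_sum _ _).trans ih)
      _ = (k + 1 : ℕ) * δ := by push_cast; ring

lemma abs_sum_mul_sub_sum_mul_le {g : X → ℝ} {M : ℝ} (hM : ∀ x y, g x - g y ≤ M)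
    {μ ν : X → ℝ} (hμν : ∑ x, μ x = ∑ x, ν x) :
    |∑ x, g x * μ x - ∑ x, g x * ν x| ≤ M * l1Dist μ ν := by
  cases isEmpty_or_nonempty X with
  | inl _ => simp [l1Dist]
  | inr hX =>
    obtain ⟨x₀⟩ := hX
    -- Centering `g` at `x₀` is free because `μ` and `ν` have the same total mass.
    have hcenter : ∑ x, g x * μ x - ∑ x, g x * ν x = ∑ x, (g x - g x₀) * (μ x - ν x) := by
      simp only [sub_mul, mul_sub, sum_sub_distrib, ← mul_sum, hμν]
      ring
    rw [hcenter, l1Dist, mul_sum]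
    refine (abs_sum_le_sum_abs _ _).trans (sum_le_sum fun x _ => ?_)
    rw [abs_mul]
    exact mul_le_mul_of_nonneg_right (abs_le.mpr ⟨by linarith [hM x₀ x], hM x x₀⟩)
      (abs_nonneg _)

theorem stmt1_general
    (Pstar : X → X → ℝ) (pistar : X → ℝ) (P : ℕ → X → X → ℝ)
    (ε : ℝ) (tmix : ℕ) (htmix : 0 < tmix)
    (hPstar_nonneg : ∀ x x', 0 ≤ Pstar x' x)
    (hPstar_sum : ∀ x, ∑ x', Pstar x' x = 1)
    (hP_nonneg : ∀ t x x', 0 ≤ P t x' x)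
    (hP_sum : ∀ t x, ∑ x', P t x' x = 1)
    (hpistar_sum : ∑ x, pistar x = 1)
    (hmix : ∀ ρ : X → ℝ, (∀ x, 0 ≤ ρ x) → (∑ x, ρ x = 1) →
      ∀ t ≥ tmix, ∑ x, |seqApply (fun _ => Pstar) ρ t x - pistar x| ≤ ε / 2)
    (hclose : ∀ t x, ∑ x', |P t x' x - Pstar x' x| ≤ ε / (2 * tmix))
    (ρ : X → ℝ) (hρ_nonneg : ∀ x, 0 ≤ ρ x) (hρ_sum : ∑ x, ρ x = 1)
    (g : X → ℝ) (M : ℝ) (hM : ∀ x y, g x - g y ≤ M) :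
    ∀ t ≥ tmix,
      |(∑ x, g x * seqApply P ρ t x) - ∑ x, g x * pistar x| ≤ M * ε := by
  intro t ht
  obtain ⟨s, rfl⟩ := Nat.exists_eq_add_of_le' ht
  set ν := seqApply P ρ s
  have hν_sum : ∑ x, ν x = 1 := by rw [sum_seqApply hP_sum, hρ_sum]
  have hM_nonneg : 0 ≤ M := by
    obtain ⟨x, -, -⟩ := exists_ne_zero_of_sum_ne_zero (hρ_sum.symm ▸ one_ne_zero)
    linarith [hM x x]
  have hdist : l1Dist (seqApply P ρ (s + tmix)) pistar ≤ ε := calc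
    l1Dist (seqApply P ρ (s + tmix)) pistar
        ≤ l1Dist (seqApply P ρ (s + tmix)) (seqApply (fun _ => Pstar) ν tmix)
          + l1Dist (seqApply (fun _ => Pstar) ν tmix) pistar := l1Dist_triangle _ _ _
    _ ≤ tmix * (ε / (2 * tmix)) + ε / 2 := add_le_add
        (l1Dist_seqApply_add_le hPstar_nonneg hPstar_sum hP_nonneg hP_sum hclose
          hρ_nonneg hρ_sum s tmix)
        (hmix ν (seqApply_nonneg hP_nonneg hρ_nonneg s) hν_sum tmix le_rfl)
    _ = ε := by field_simp; ring
  calc |∑ x, g x * seqApply P ρ (s + tmix) x - ∑ x, g x * pistar x|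
      ≤ M * l1Dist (seqApply P ρ (s + tmix)) pistar :=
        abs_sum_mul_sub_sum_mul_le hM (by rw [sum_seqApply hP_sum, hρ_sum, hpistar_sum])
    _ ≤ M * ε := mul_le_mul_of_nonneg_left hdist hM_nonneg

/-- For the non-homogeneous chain generated by the perturbed kernels `P_t`, the expectation
of a bounded function `g` with oscillation `M` is within `M ε` of its stationary expectation
after the mixing time. -/
theorem stmt1
    (Pstar : X → X → ℝ) (pistar : X → ℝ) (P : ℕ → X → X → ℝ)
    (ε : ℝ) (hε : 0 < ε) (tmix : ℕ) (htmix : 0 < tmix)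
    (hPstar_nonneg : ∀ x x', 0 ≤ Pstar x' x)
    (hPstar_sum : ∀ x, ∑ x', Pstar x' x = 1)
    (hP_nonneg : ∀ t x x', 0 ≤ P t x' x)
    (hP_sum : ∀ t x, ∑ x', P t x' x = 1)
    (hpistar_nonneg : ∀ x, 0 ≤ pistar x) (hpistar_sum : ∑ x, pistar x = 1)
    (hstat : step Pstar pistar = pistar)
    (hmix : ∀ ρ : X → ℝ, (∀ x, 0 ≤ ρ x) → (∑ x, ρ x = 1) →
      ∀ t ≥ tmix, ∑ x, |seqApply (fun _ => Pstar) ρ t x - pistar x| ≤ ε / 2)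
    (hclose : ∀ t x, ∑ x', |P t x' x - Pstar x' x| ≤ ε / (2 * tmix))
    (ρ : X → ℝ) (hρ_nonneg : ∀ x, 0 ≤ ρ x) (hρ_sum : ∑ x, ρ x = 1)
    (g : X → ℝ) (M : ℝ) (hM : ∀ x y, g x - g y ≤ M) :
    ∀ t ≥ tmix,
      |(∑ x, g x * seqApply P ρ t x) - ∑ x, g x * pistar x| ≤ M * ε :=
  stmt1_general Pstar pistar P ε tmix htmix hPstar_nonneg hPstar_sum hP_nonneg hP_sum hpistar_sum
    hmix hclose ρ hρ_nonneg hρ_sum g M hM
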